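/- Let S ⊂ ℤ_{≥0}^r be a good semigroup with weight function w. Suppose ℓ ∈ ℤ_{≥0}^r and J⁺ ⊆ {1,…,r} satisfy: (a) w(ℓ) > w(ℓ+eᵢ) for all i ∈ J⁺, and (b) ℓ⁺ := ℓ + e_{J⁺} is a generalized local minimum point of w. Then w(ℓ) ≤ 1. -/
import Mathlib


open Finset

/-- Lattice points (we work in `ℤ^r`; nonnegativity is imposed via hypotheses). -/
abbrev Pt (r : ℕ) := Fin r → ℤ

/-- The `i`-th standard basis vector. -/
def E {r : ℕ} (i : Fin r) : Pt r := Pi.single i 1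

/-- `e_K = ∑_{i ∈ K} e_i`. -/
def eK {r : ℕ} (K : Finset (Fin r)) : Pt r := ∑ i ∈ K, E i

/-- `Δ̄ᵢ(ℓ) = {s ∈ S : sᵢ = ℓᵢ, sⱼ ≥ ℓⱼ ∀ j ≠ i}`. -/
def DeltaBarI {r : ℕ} (S : Set (Pt r)) (ℓ : Pt r) (i : Fin r) : Set (Pt r) :=
  {s | s ∈ S ∧ s i = ℓ i ∧ ∀ j, j ≠ i → ℓ j ≤ s j}

/-- `Δᵢ(ℓ) = {s ∈ S : sᵢ = ℓᵢ, sⱼ > ℓⱼ ∀ j ≠ i}`. -/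
def DeltaI {r : ℕ} (S : Set (Pt r)) (ℓ : Pt r) (i : Fin r) : Set (Pt r) :=
  {s | s ∈ S ∧ s i = ℓ i ∧ ∀ j, j ≠ i → ℓ j < s j}

/-- `Δ(ℓ) = ∪ᵢ Δᵢ(ℓ)`. -/
def Delta {r : ℕ} (S : Set (Pt r)) (ℓ : Pt r) : Set (Pt r) := ⋃ i, DeltaI S ℓ i

/-- A good (local) semigroup `S ⊂ ℤ_{≥0}^r` with conductor `c`. -/
structure GoodSemigroup (r : ℕ) where
  S : Set (Pt r)
  c : Pt r
  nonneg : ∀ s ∈ S, (0 : Pt r) ≤ s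
  zero_mem : (0 : Pt r) ∈ S
  add_mem : ∀ s ∈ S, ∀ t ∈ S, s + t ∈ S
  coord_zero : ∀ s ∈ S, ∀ i, s i = 0 → s = 0
  min_mem : ∀ s ∈ S, ∀ t ∈ S, s ⊓ t ∈ S
  prop3 : ∀ s ∈ S, ∀ t ∈ S, ∀ i, s i = t i →
    ∃ u ∈ S, s ⊓ t ≤ u ∧ s i < u i ∧ ∀ j, j ≠ i → s j ≠ t j → u j = (s ⊓ t) j
  conductor_nonneg : (0 : Pt r) ≤ c
  conductor_mem : ∀ ℓ : Pt r, c ≤ ℓ → ℓ ∈ S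
  conductor_min : ∀ c' : Pt r, 0 ≤ c' → (∀ ℓ, c' ≤ ℓ → ℓ ∈ S) → c ≤ c'

/-- `h` is the (combinatorial) Hilbert function of the good semigroup `G`. -/
def IsHilbert {r : ℕ} (G : GoodSemigroup r) (h : Pt r → ℤ) : Prop :=
  h 0 = 0 ∧ ∀ ℓ : Pt r, 0 ≤ ℓ → ∀ i : Fin r,
    (h (ℓ + E i) = h ℓ + 1 ↔ (DeltaBarI G.S ℓ i).Nonempty) ∧
    (h (ℓ + E i) = h ℓ ↔ ¬ (DeltaBarI G.S ℓ i).Nonempty)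

/-- `w` is the weight function of the good semigroup `G` (i.e. `w(ℓ) = 2h(ℓ) − |ℓ|`),
characterized by `w(0) = 0` and the step property. -/
def IsWeight {r : ℕ} (G : GoodSemigroup r) (w : Pt r → ℤ) : Prop :=
  w 0 = 0 ∧ ∀ ℓ : Pt r, 0 ≤ ℓ → ∀ i : Fin r,
    (w (ℓ + E i) = w ℓ + 1 ↔ (DeltaBarI G.S ℓ i).Nonempty) ∧
    (w (ℓ + E i) = w ℓ - 1 ↔ ¬ (DeltaBarI G.S ℓ i).Nonempty)

/-- Generalized local minimum point of the weight function. -/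
def GLM {r : ℕ} (w : Pt r → ℤ) (p : Pt r) : Prop :=
  0 ≤ p ∧ ∀ i : Fin r, 1 ≤ p i → w p < w (p - E i)

/-- Local minimum point of the weight function. -/
def LocMin {r : ℕ} (w : Pt r → ℤ) (p : Pt r) : Prop :=
  GLM w p ∧ ∀ i : Fin r, w p < w (p + E i)

section Aux

variable {r : ℕ}

lemma E_apply (i j : Fin r) : E i j = if j = i then 1 else 0 := by
  simp [E, Pi.single_apply]

lemma E_nonneg (i : Fin r) : (0 : Pt r) ≤ E i := by
  intro j; simp [E_apply]; split <;> norm_num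

lemma eK_apply (K : Finset (Fin r)) (j : Fin r) :
    eK K j = if j ∈ K then 1 else 0 := by
  simp only [eK, Finset.sum_apply, E_apply]
  simp [Finset.sum_ite_eq' K j (fun _ => (1 : ℤ))]

lemma eK_nonneg (K : Finset (Fin r)) : (0 : Pt r) ≤ eK K := by
  intro j; simp [eK_apply]; split <;> norm_num

lemma step_up (G : GoodSemigroup r) (w : Pt r → ℤ) (hw : IsWeight G w)
    {b : Pt r} (hb : 0 ≤ b) (i : Fin r) (h : (DeltaBarI G.S b i).Nonempty) :
    w (b + E i) = w b + 1 := ((hw.2 b hb i).1).mpr h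

lemma step_down (G : GoodSemigroup r) (w : Pt r → ℤ) (hw : IsWeight G w)
    {b : Pt r} (hb : 0 ≤ b) (i : Fin r) (h : ¬ (DeltaBarI G.S b i).Nonempty) :
    w (b + E i) = w b - 1 := ((hw.2 b hb i).2).mpr h

lemma step_le (G : GoodSemigroup r) (w : Pt r → ℤ) (hw : IsWeight G w)
    {b : Pt r} (hb : 0 ≤ b) (i : Fin r) : w (b + E i) ≤ w b + 1 := by
  by_cases h : (DeltaBarI G.S b i).Nonempty
  · exact le_of_eq (step_up G w hw hb i h)
  · rw [step_down G w hw hb i h]; linarith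

/-- At a generalized local minimum `p`, the fibre `Δ̄ᵢ(p - eᵢ)` is empty. -/
lemma glm_empty (G : GoodSemigroup r) (w : Pt r → ℤ) (hw : IsWeight G w)
    {p : Pt r} (hp : GLM w p) (i : Fin r) (h1 : 1 ≤ p i) :
    ¬ (DeltaBarI G.S (p - E i) i).Nonempty := by
  intro hne
  have hnn : 0 ≤ p - E i := by
    intro j
    simp only [Pi.sub_apply, Pi.zero_apply, E_apply]
    by_cases hj : j = i
    · subst hj; simp; linarith
    · simp [hj]; exact hp.1 j
  have := step_up G w hw hnn i hne
  rw [sub_add_cancel] at this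
  have := hp.2 i h1
  omega

/-- Key symmetry lemma: at a GLM `p`, `w q + w p ≤ w (p - q)` for `0 ≤ q ≤ p`. -/
lemma keyB (G : GoodSemigroup r) (w : Pt r → ℤ) (hw : IsWeight G w)
    {p : Pt r} (hp : GLM w p) :
    ∀ n : ℕ, ∀ q : Pt r, 0 ≤ q → q ≤ p → (∑ j, q j) = (n : ℤ) →
      w q + w p ≤ w (p - q) := by
  intro n
  induction n with
  | zero =>
    intro q hq0 _ hsum
    have hq : q = 0 := by
      funext j
      have := (Finset.sum_eq_zero_iff_of_nonneg
        (fun j _ => hq0 j)).mp (by simpa using hsum) j (Finset.mem_univ j)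
      simpa using this
    subst hq
    simp [hw.1]
  | succ n ih =>
    intro q hq0 hqp hsum
    -- find a coordinate with q i ≥ 1
    have hqne : ∃ i, q i ≠ 0 := by
      by_contra hc
      push_neg at hc
      have h0 : (∑ j, q j) = 0 := Finset.sum_eq_zero (fun j _ => hc j)
      rw [h0] at hsum
      exact Nat.succ_ne_zero n (by exact_mod_cast hsum.symm)
    obtain ⟨i, hi⟩ := hqne
    have hqi : 1 ≤ q i := by have := hq0 i; simp at this; omega
    set q' : Pt r := q - E i with hq'
    have hq'0 : 0 ≤ q' := by
      intro j
      simp only [hq', Pi.sub_apply, Pi.zero_apply, E_apply]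
      by_cases hj : j = i
      · subst hj; simp; linarith
      · simp [hj]; exact hq0 j
    have hq'p : q' ≤ p := fun j => le_trans (by
      simp only [hq', Pi.sub_apply, E_apply]
      split <;> linarith [le_refl (q j)]) (hqp j)
    have hsum' : (∑ j, q' j) = (n : ℤ) := by
      have hE : (∑ j, E i j) = (1 : ℤ) := by
        simp [E_apply, Finset.sum_ite_eq' Finset.univ i (fun _ => (1 : ℤ))]
      have : (∑ j, q' j) = (∑ j, q j) - (∑ j, E i j) := by
        simp [hq', Finset.sum_sub_distrib]
      rw [this, hsum, hE]
      push_cast; ring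
    have IH := ih q' hq'0 hq'p hsum'
    have hqq' : q' + E i = q := sub_add_cancel q (E i)
    have hpq' : p - q' = (p - q) + E i := by rw [hq']; abel
    have hpq0 : 0 ≤ p - q := fun j => by
      simp only [Pi.sub_apply, Pi.zero_apply]; linarith [hqp j]
    -- p i ≥ 1
    have hpi : 1 ≤ p i := le_trans hqi (hqp i)
    have hglm := glm_empty G w hw hp i hpi
    by_cases hne : (DeltaBarI G.S q' i).Nonempty
    · -- up at q', hence down at p - q
      obtain ⟨s, hsS, hsi, hsj⟩ := hne
      have hdown : ¬ (DeltaBarI G.S (p - q) i).Nonempty := by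
        rintro ⟨t, htS, hti, htj⟩
        refine hglm ⟨s + t, G.add_mem s hsS t htS, ?_, ?_⟩
        · have h1 : s i = q i - 1 := by
            rw [hsi, hq']; simp [E_apply]
          have h2 : t i = p i - q i := hti
          show s i + t i = p i - E i i
          rw [h1, h2]; simp [E_apply]
        · intro j hj
          have h1 : q j ≤ s j := by
            have := hsj j hj
            simpa [hq', E_apply, hj] using this
          have h2 : p j - q j ≤ t j := htj j hj
          show p j - E i j ≤ s j + t j
          rw [show E i j = 0 by simp [E_apply, hj]]
          linarith
      have h1 : w (p - q') = w (p - q) - 1 := by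
        rw [hpq']; exact step_down G w hw hpq0 i hdown
      have h2 : w q = w q' + 1 := by
        rw [← hqq']; exact step_up G w hw hq'0 i ⟨s, hsS, hsi, hsj⟩
      linarith
    · have h1 : w q = w q' - 1 := by
        rw [← hqq']; exact step_down G w hw hq'0 i hne
      have h2 : w (p - q') ≤ w (p - q) + 1 := by
        rw [hpq']; exact step_le G w hw hpq0 i
      linarith

end Aux

/-- if `ℓ` is an M-vertex of the positively directed cube `(ℓ, J⁺, ∅)`
and `ℓ + e_{J⁺}` is a generalized local minimum, then `w(ℓ) ≤ 1`. -/
theorem stmt18 {r : ℕ} (G : GoodSemigroup r) (w : Pt r → ℤ) (hw : IsWeight G w)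
    (ℓ : Pt r) (hl : 0 ≤ ℓ) (Jp : Finset (Fin r))
    (ha : ∀ i ∈ Jp, w (ℓ + E i) < w ℓ)
    (hb : GLM w (ℓ + eK Jp)) :
    w ℓ ≤ 1 := by
  -- Δ̄ᵢ(ℓ) is empty for i ∈ Jp
  have hempty : ∀ i ∈ Jp, ¬ (DeltaBarI G.S ℓ i).Nonempty := by
    intro i hi hne
    have := step_up G w hw hl i hne
    have := ha i hi
    omega
  -- cube lemma : w (ℓ + eK K) = w ℓ - K.card for K ⊆ Jp
  have hcube : ∀ K : Finset (Fin r), K ⊆ Jp → w (ℓ + eK K) = w ℓ - K.card := by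
    intro K
    induction K using Finset.induction_on with
    | empty => intro _; simp [eK]
    | @insert i K hiK ih =>
      intro hsub
      have hKJ : K ⊆ Jp := fun j hj => hsub (Finset.mem_insert_of_mem hj)
      have hiJ : i ∈ Jp := hsub (Finset.mem_insert_self i K)
      have hnn : 0 ≤ ℓ + eK K := fun j => by
        have := hl j; have := eK_nonneg K j
        simp only [Pi.add_apply, Pi.zero_apply] at *
        linarith
      have hemp : ¬ (DeltaBarI G.S (ℓ + eK K) i).Nonempty := by
        rintro ⟨s, hsS, hsi, hsj⟩
        refine hempty i hiJ ⟨s, hsS, ?_, ?_⟩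
        · rw [hsi]; simp [eK_apply, hiK]
        · intro j hj
          have := hsj j hj
          have h0 : (0 : ℤ) ≤ eK K j := by have := eK_nonneg K j; simpa using this
          simp only [Pi.add_apply] at this
          linarith
      have hEq : ℓ + eK (insert i K) = (ℓ + eK K) + E i := by
        simp only [eK, Finset.sum_insert hiK]; abel
      rw [hEq, step_down G w hw hnn i hemp, ih hKJ,
        Finset.card_insert_of_notMem hiK]
      push_cast; ring
  -- w (eK K) = 2 - K.card for nonempty K
  have hweK : ∀ K : Finset (Fin r), K.Nonempty → w (eK K) = 2 - K.card := by
    intro K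
    induction K using Finset.induction_on with
    | empty => intro h; exact absurd h (by simp)
    | @insert i K hiK ih =>
      intro _
      rcases K.eq_empty_or_nonempty with h | hK
      · subst h
        have hEq : eK (insert i (∅ : Finset (Fin r))) = 0 + E i := by
          simp [eK]
        have hne : (DeltaBarI G.S (0 : Pt r) i).Nonempty :=
          ⟨0, G.zero_mem, rfl, fun j _ => le_refl _⟩
        rw [hEq, step_up G w hw (le_refl _) i hne, hw.1]
        simp
      · have hemp : ¬ (DeltaBarI G.S (eK K) i).Nonempty := by
          rintro ⟨s, hsS, hsi, hsj⟩
          obtain ⟨j, hj⟩ := hK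
          have hji : j ≠ i := fun h => hiK (h ▸ hj)
          have h1 : (1 : ℤ) ≤ s j :=
            le_trans (by simp [eK_apply, hj]) (hsj j hji)
          have hs0 : s = 0 := G.coord_zero s hsS i (by simpa [eK_apply, hiK] using hsi)
          rw [hs0] at h1; simp at h1
        have hEq : eK (insert i K) = eK K + E i := by
          simp only [eK, Finset.sum_insert hiK]; abel
        rw [hEq, step_down G w hw (eK_nonneg K) i hemp, ih hK,
          Finset.card_insert_of_notMem hiK]
        push_cast; ring
  -- main combination
  set p : Pt r := ℓ + eK Jp with hpdef
  have hlp : ℓ ≤ p := fun j => by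
    have := eK_nonneg Jp j
    simp only [hpdef, Pi.add_apply, Pi.zero_apply] at *
    linarith
  have hsumnn : (0 : ℤ) ≤ ∑ j, ℓ j := Finset.sum_nonneg (fun j _ => hl j)
  have hkey := keyB G w hw hb ((∑ j, ℓ j).toNat) ℓ hl hlp
    (by rw [Int.toNat_of_nonneg hsumnn])
  have hpml : p - ℓ = eK Jp := by rw [hpdef]; abel
  rw [hpml] at hkey
  have hcJp := hcube Jp (le_refl _)
  rcases Jp.eq_empty_or_nonempty with h | h
  · subst h
    have h0 : eK (∅ : Finset (Fin r)) = (0 : Pt r) := by simp [eK]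
    rw [h0] at hkey
    rw [hw.1] at hkey
    simp [h0] at hcJp ⊢
    -- hkey : w ℓ + w p ≤ 0, p = ℓ + 0
    have hp0 : p = ℓ := by rw [hpdef, h0, add_zero]
    rw [hp0] at hkey
    linarith
  · have hwK := hweK Jp h
    rw [hwK] at hkey
    rw [← hpdef] at hcJp
    have hc1 : (1 : ℤ) ≤ Jp.card := by
      exact_mod_cast Nat.one_le_iff_ne_zero.mpr (Finset.card_ne_zero_of_mem h.choose_spec)
    linarith
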